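/- Let all preferences in P be substitutable and satisfy the law of aggregate demand, let μ_F be the firm-optimal stable matching and μ_W the worker-optimal stable matching, and let P^{μ_F} denote the reduced preference profile with respect to μ_F and μ_W. Then S(P) = S(P^{μ_F}), i.e., a matching is stable under P if and only if it is stable under P^{μ_F}. -/
import Mathlib


open Finset

noncomputable section

open scoped Classical

/-- `C` is a choice function: `C S ⊆ S` for every `S`. -/
def IsChoiceFun {α : Type*} (C : Finset α → Finset α) : Prop := ∀ S, C S ⊆ S

/-- Substitutability of a choice function: if `b` is chosen from `S`, then `b` is chosen
from `S' ∪ {b}` for every `S' ⊆ S`. -/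
def Substitutable {α : Type*} [DecidableEq α] (C : Finset α → Finset α) : Prop :=
  ∀ (S S' : Finset α) (b : α), S' ⊆ S → b ∈ C S → b ∈ C (insert b S')

/-- The law of aggregate demand for a choice function. -/
def LAD {α : Type*} (C : Finset α → Finset α) : Prop :=
  ∀ S' S : Finset α, S' ⊆ S → (C S').card ≤ (C S).card

/-- The most `u`-preferred subset of `S` among the members of the family `A` of acceptable
sets (the empty set is always available as a fallback). -/
def bestIn {α : Type*} (u : Finset α → ℕ) (A : Set (Finset α)) (S : Finset α) : Finset α := by
  classical
  have h : ∃ T ∈ (S.powerset).filter (fun T => T ∈ A ∨ T = ∅),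
      ∀ T' ∈ (S.powerset).filter (fun T => T ∈ A ∨ T = ∅), u T' ≤ u T :=
    Finset.exists_max_image _ u ⟨∅, by simp⟩
  exact h.choose

/-- A many-to-many matching market: each firm `f` has a strict preference over subsets
of workers, represented by an injective utility `uF f`, and symmetrically for workers. -/
structure Market (F W : Type*) where
  uF : F → Finset W → ℕ
  uW : W → Finset F → ℕ
  injF : ∀ f, Function.Injective (uF f)
  injW : ∀ w, Function.Injective (uW w)

/-- A many-to-many matching. -/
structure Matching (F W : Type*) where
  fm : F → Finset W
  wm : W → Finset F
  consistent : ∀ f w, w ∈ fm f ↔ f ∈ wm w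

namespace Market

variable {F W : Type*} [DecidableEq F] [DecidableEq W]

/-- The choice set of firm `f` under the original preference: the most preferred
subset among the acceptable subsets (those strictly preferred to `∅`). -/
def Cf (M : Market F W) (f : F) : Finset W → Finset W :=
  bestIn (M.uF f) {T | M.uF f ∅ < M.uF f T}

/-- The choice set of worker `w` under the original preference. -/
def Cw (M : Market F W) (w : W) : Finset F → Finset F :=
  bestIn (M.uW w) {T | M.uW w ∅ < M.uW w T}

/-- Individual rationality under the original profile. -/
def IR (M : Market F W) (μ : Matching F W) : Prop :=
  (∀ f, M.Cf f (μ.fm f) = μ.fm f) ∧ (∀ w, M.Cw w (μ.wm w) = μ.wm w)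

/-- `(f,w)` blocks `μ` under the original profile. -/
def Blocks (M : Market F W) (μ : Matching F W) (f : F) (w : W) : Prop :=
  w ∉ μ.fm f ∧ w ∈ M.Cf f (insert w (μ.fm f)) ∧ f ∈ M.Cw w (insert f (μ.wm w))

/-- Stability under the original profile. -/
def Stable (M : Market F W) (μ : Matching F W) : Prop :=
  M.IR μ ∧ ∀ f w, ¬ M.Blocks μ f w

/-- Blair's partial order for firm `f`: `S ⪰_f S'` iff `C_f (S ∪ S') = S`. -/
def blairF (M : Market F W) (f : F) (S S' : Finset W) : Prop := M.Cf f (S ∪ S') = S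

/-- Blair's partial order for worker `w`. -/
def blairW (M : Market F W) (w : W) (S S' : Finset F) : Prop := M.Cw w (S ∪ S') = S

/-- The unanimous Blair order for the firms' side: `μ ⪰_F μ'`. -/
def geF (M : Market F W) (μ μ' : Matching F W) : Prop := ∀ f, M.blairF f (μ.fm f) (μ'.fm f)

/-- The unanimous Blair order for the workers' side: `μ ⪰_W μ'`. -/
def geW (M : Market F W) (μ μ' : Matching F W) : Prop := ∀ w, M.blairW w (μ.wm w) (μ'.wm w)

/-- Strict unanimous Blair order for the firms' side: `μ ≻_F μ'`. -/
def gtF (M : Market F W) (μ μ' : Matching F W) : Prop := M.geF μ μ' ∧ μ ≠ μ'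

/-- Workers deleted from `f`'s list in Step 1(a) of the reduction procedure:
those belonging to some `W' ≻_f μ(f)` but not to `μ(f)`. -/
def D1 (M : Market F W) (μ : Matching F W) (f : F) : Set W :=
  {x | ∃ W' : Finset W, (M.Cf f (W' ∪ μ.fm f) = W' ∧ W' ≠ μ.fm f) ∧ x ∈ W' ∧ x ∉ μ.fm f}

/-- Workers deleted from `f`'s list in Step 2(a): those belonging to some `W'` with
`μ̃(f) ≻_f W'` but not to `μ̃(f)`. -/
def D2 (M : Market F W) (μt : Matching F W) (f : F) : Set W :=
  {x | ∃ W' : Finset W, (M.Cf f (μt.fm f ∪ W') = μt.fm f ∧ μt.fm f ≠ W') ∧ x ∈ W' ∧ x ∉ μt.fm f}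

/-- Firms deleted from `w`'s list in Step 1(b). -/
def E1 (M : Market F W) (μt : Matching F W) (w : W) : Set F :=
  {x | ∃ F' : Finset F, (M.Cw w (F' ∪ μt.wm w) = F' ∧ F' ≠ μt.wm w) ∧ x ∈ F' ∧ x ∉ μt.wm w}

/-- Firms deleted from `w`'s list in Step 2(b). -/
def E2 (M : Market F W) (μ : Matching F W) (w : W) : Set F :=
  {x | ∃ F' : Finset F, (M.Cw w (μ.wm w ∪ F') = μ.wm w ∧ μ.wm w ≠ F') ∧ x ∈ F' ∧ x ∉ μ.wm w}

/-- Workers deleted from `f`'s list in Step 3: those workers `w` for which `{f}` is no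
longer on `w`'s list after Steps 1 and 2 (either `{f}` was never acceptable to `w`, or
`f` was deleted from `w`'s list in Step 1(b) or 2(b)). -/
def D3 (M : Market F W) (μ μt : Matching F W) (f : F) : Set W :=
  {w | ¬ (M.uW w ∅ < M.uW w {f}) ∨ f ∈ M.E1 μt w ∪ M.E2 μ w}

/-- Firms deleted from `w`'s list in Step 3. -/
def E3 (M : Market F W) (μ μt : Matching F W) (w : W) : Set F :=
  {f | ¬ (M.uF f ∅ < M.uF f {w}) ∨ w ∈ M.D1 μ f ∪ M.D2 μt f}

/-- All workers deleted from `f`'s list in the reduction procedure. -/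
def Dall (M : Market F W) (μ μt : Matching F W) (f : F) : Set W :=
  M.D1 μ f ∪ M.D2 μt f ∪ M.D3 μ μt f

/-- All firms deleted from `w`'s list in the reduction procedure. -/
def Eall (M : Market F W) (μ μt : Matching F W) (w : W) : Set F :=
  M.E1 μt w ∪ M.E2 μ w ∪ M.E3 μ μt w

/-- The family of sets surviving in `f`'s list under the reduced profile `P^{μ,μ̃}`:
originally acceptable sets containing no deleted worker. -/
def RAf (M : Market F W) (μ μt : Matching F W) (f : F) : Set (Finset W) :=
  {T | M.uF f ∅ < M.uF f T ∧ ∀ x ∈ T, x ∉ M.Dall μ μt f}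

/-- The family of sets surviving in `w`'s list under the reduced profile `P^{μ,μ̃}`. -/
def RAw (M : Market F W) (μ μt : Matching F W) (w : W) : Set (Finset F) :=
  {T | M.uW w ∅ < M.uW w T ∧ ∀ x ∈ T, x ∉ M.Eall μ μt w}

/-- The choice set `C^{μ,μ̃}_f` of firm `f` under the reduced profile. -/
def Cfred (M : Market F W) (μ μt : Matching F W) (f : F) : Finset W → Finset W :=
  bestIn (M.uF f) (M.RAf μ μt f)

/-- The choice set `C^{μ,μ̃}_w` of worker `w` under the reduced profile. -/
def Cwred (M : Market F W) (μ μt : Matching F W) (w : W) : Finset F → Finset F :=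
  bestIn (M.uW w) (M.RAw μ μt w)

/-- Individual rationality under the reduced profile `P^{μ,μ̃}`. -/
def IRred (M : Market F W) (μ μt ν : Matching F W) : Prop :=
  (∀ f, M.Cfred μ μt f (ν.fm f) = ν.fm f) ∧ (∀ w, M.Cwred μ μt w (ν.wm w) = ν.wm w)

/-- Blocking under the reduced profile `P^{μ,μ̃}`. -/
def Blocksred (M : Market F W) (μ μt ν : Matching F W) (f : F) (w : W) : Prop :=
  w ∉ ν.fm f ∧ w ∈ M.Cfred μ μt f (insert w (ν.fm f)) ∧
    f ∈ M.Cwred μ μt w (insert f (ν.wm w))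

/-- Stability under the reduced profile `P^{μ,μ̃}`. -/
def Stablered (M : Market F W) (μ μt ν : Matching F W) : Prop :=
  M.IRred μ μt ν ∧ ∀ f w, ¬ M.Blocksred μ μt ν f w

/-- The unanimous Blair order on the firms' side computed with the reduced choice sets. -/
def geFred (M : Market F W) (μ μt ν ν' : Matching F W) : Prop :=
  ∀ f, M.Cfred μ μt f (ν.fm f ∪ ν'.fm f) = ν.fm f

/-- The unanimous Blair order on the workers' side computed with the reduced choice sets. -/
def geWred (M : Market F W) (μ μt ν ν' : Matching F W) : Prop :=
  ∀ w, M.Cwred μ μt w (ν.wm w ∪ ν'.wm w) = ν.wm w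

/-- All preferences in the market are substitutable. -/
def SubstAll (M : Market F W) : Prop :=
  (∀ f, Substitutable (M.Cf f)) ∧ (∀ w, Substitutable (M.Cw w))

/-- All preferences in the market satisfy the law of aggregate demand. -/
def LADAll (M : Market F W) : Prop :=
  (∀ f, LAD (M.Cf f)) ∧ (∀ w, LAD (M.Cw w))

/-- A cycle for the reduced profile `P^{μ,μ̃}`: an `r`-periodic sequence of worker-firm
pairs `(w_i, f_i)` (indexed cyclically) such that (i) `w_i ∈ μ(f_i) \ μ̃(f_i)`;
(ii) `C^{μ,μ̃}_{f_i}(W \ {w_i}) = (μ(f_i) \ {w_i}) ∪ {w_{i+1}}`; and (iii)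
`C^{μ,μ̃}_{w_{i+1}}(μ(w_{i+1}) ∪ {f_i}) = (μ(w_{i+1}) \ {f_{i+1}}) ∪ {f_i}`. -/
def IsCycle [Fintype W] (M : Market F W) (μ μt : Matching F W) (r : ℕ)
    (w : ℕ → W) (f : ℕ → F) : Prop :=
  0 < r ∧ (∀ i, w (i + r) = w i) ∧ (∀ i, f (i + r) = f i) ∧
  ∀ i, (w i ∈ μ.fm (f i) ∧ w i ∉ μt.fm (f i)) ∧
    M.Cfred μ μt (f i) (Finset.univ \ {w i}) = insert (w (i + 1)) (μ.fm (f i) \ {w i}) ∧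
    M.Cwred μ μt (w (i + 1)) (μ.wm (w (i + 1)) ∪ {f i}) =
      insert (f i) (μ.wm (w (i + 1)) \ {f (i + 1)})

/-- The firm-side assignment of the cyclic matching `μ_σ` obtained from the cycle
`σ = (w, f)` of length `r`. -/
def cyclicFm (μ : Matching F W) (r : ℕ) (w : ℕ → W) (f : ℕ → F) (g : F) : Finset W :=
  if ∃ i ∈ Finset.range r, f i = g then
    (μ.fm g \ ((Finset.range r).filter (fun i => f i = g)).image w) ∪
      ((Finset.range r).filter (fun i => f i = g)).image (fun i => w (i + 1))
  else μ.fm g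

/-- `ν` is a cyclic matching under the reduced profile `P^{μ,μ̃}`: `ν = μ_σ` for some
cycle `σ` for `P^{μ,μ̃}` (the worker side of `ν` is determined by consistency). -/
def IsCyclicMatching [Fintype W] (M : Market F W) (μ μt ν : Matching F W) : Prop :=
  ∃ (r : ℕ) (w : ℕ → W) (f : ℕ → F),
    M.IsCycle μ μt r w f ∧ ∀ g, ν.fm g = cyclicFm μ r w f g

end Market

/-! ### Auxiliary lemmas -/

section BestInAPI
variable {α : Type*} {u : Finset α → ℕ} {A : Set (Finset α)} {S S' T : Finset α}

lemma bestIn_spec (u : Finset α → ℕ) (A : Set (Finset α)) (S : Finset α) :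
    (bestIn u A S ⊆ S ∧ (bestIn u A S ∈ A ∨ bestIn u A S = ∅)) ∧
      ∀ T ⊆ S, (T ∈ A ∨ T = ∅) → u T ≤ u (bestIn u A S) := by
  have h : ∃ T ∈ (S.powerset).filter (fun T => T ∈ A ∨ T = ∅),
      ∀ T' ∈ (S.powerset).filter (fun T => T ∈ A ∨ T = ∅), u T' ≤ u T :=
    Finset.exists_max_image _ u ⟨∅, by simp⟩
  have e : bestIn u A S = h.choose := rfl
  have hs := h.choose_spec
  rw [← e] at hs
  simp only [Finset.mem_filter, Finset.mem_powerset] at hs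
  exact ⟨hs.1, fun T hT hA => hs.2 T (by simp [Finset.mem_filter, Finset.mem_powerset, hT, hA])⟩

lemma bestIn_subset : bestIn u A S ⊆ S := (bestIn_spec u A S).1.1

lemma bestIn_acc : bestIn u A S ∈ A ∨ bestIn u A S = ∅ := (bestIn_spec u A S).1.2

lemma bestIn_le (hT : T ⊆ S) (hA : T ∈ A ∨ T = ∅) : u T ≤ u (bestIn u A S) :=
  (bestIn_spec u A S).2 T hT hA

lemma bestIn_eq (hinj : Function.Injective u) (hT : T ⊆ S) (hA : T ∈ A ∨ T = ∅)
    (hmax : ∀ T' ⊆ S, (T' ∈ A ∨ T' = ∅) → u T' ≤ u T) : bestIn u A S = T := by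
  apply hinj
  exact le_antisymm (hmax _ bestIn_subset bestIn_acc) (bestIn_le hT hA)

/-- Consistency of a rationalized choice. -/
lemma bestIn_cons (hinj : Function.Injective u) (h1 : bestIn u A S ⊆ S') (h2 : S' ⊆ S) :
    bestIn u A S' = bestIn u A S :=
  bestIn_eq hinj h1 bestIn_acc (fun T' hT' hA' => bestIn_le (hT'.trans h2) hA')

end BestInAPI

section SubstAPI
variable {α : Type*} [DecidableEq α] {u : Finset α → ℕ} {A : Set (Finset α)}

/-- Path independence. -/
lemma bestIn_PI (hinj : Function.Injective u) (hsub : Substitutable (bestIn u A))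
    (X Y : Finset α) : bestIn u A (bestIn u A X ∪ Y) = bestIn u A (X ∪ Y) := by
  apply bestIn_cons hinj
  · intro b hb
    rcases Finset.mem_union.1 (bestIn_subset hb) with hX | hY
    · exact Finset.mem_union_left _ (by
        have := hsub (X ∪ Y) X b Finset.subset_union_left hb
        rwa [Finset.insert_eq_self.2 hX] at this)
    · exact Finset.mem_union_right _ hY
  · exact Finset.union_subset_union_left bestIn_subset

/-- If `A₀ = C (A₀ ∪ B)`, then choices from `insert b (A₀ ∪ B)` and `insert b A₀` agree. -/
lemma bestIn_extend (hinj : Function.Injective u) (hsub : Substitutable (bestIn u A))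
    {A₀ B : Finset α} (h : bestIn u A (A₀ ∪ B) = A₀) (b : α) :
    bestIn u A (insert b (A₀ ∪ B)) = bestIn u A (insert b A₀) := by
  have hpi := bestIn_PI hinj hsub (A₀ ∪ B) {b}
  rw [h] at hpi
  rw [Finset.insert_eq, Finset.insert_eq, Finset.union_comm {b}, Finset.union_comm {b}]
  exact hpi.symm

end SubstAPI

/-- Abstract polarization lemma. -/
lemma polar {F W : Type*} [DecidableEq F] [DecidableEq W]
    (Cf' : F → Finset W → Finset W) (Cw' : W → Finset F → Finset F)
    (hCwsub : ∀ w S, Cw' w S ⊆ S)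
    (hCfS : ∀ f, Substitutable (Cf' f)) (hCwS : ∀ w, Substitutable (Cw' w))
    (hCwCons : ∀ w S S'', Cw' w S ⊆ S'' → S'' ⊆ S → Cw' w S'' = Cw' w S)
    (fm fm' : F → Finset W) (wm wm' : W → Finset F)
    (hcons : ∀ f w, w ∈ fm f ↔ f ∈ wm w) (hcons' : ∀ f w, w ∈ fm' f ↔ f ∈ wm' w)
    (hIR' : ∀ w, Cw' w (wm' w) = wm' w)
    (hNB' : ∀ f w, w ∉ fm' f → w ∈ Cf' f (insert w (fm' f)) →
      f ∈ Cw' w (insert f (wm' w)) → False)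
    (hge : ∀ f, Cf' f (fm f ∪ fm' f) = fm f) :
    ∀ w, Cw' w (wm' w ∪ wm w) = wm' w := by
  intro w
  have hsubw : Cw' w (wm' w ∪ wm w) ⊆ wm' w := by
    intro f hf
    by_contra hfn
    have hfm : f ∈ wm w := by
      rcases Finset.mem_union.1 (hCwsub w _ hf) with h | h
      · exact absurd h hfn
      · exact h
    have hw1 : w ∈ Cf' f (fm f ∪ fm' f) := by rw [hge f]; exact (hcons f w).2 hfm
    have hw2 : w ∈ Cf' f (insert w (fm' f)) :=
      hCfS f _ _ w Finset.subset_union_right hw1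
    have hf2 : f ∈ Cw' w (insert f (wm' w)) :=
      hCwS w _ _ f Finset.subset_union_left hf
    exact hNB' f w (fun hmem => hfn ((hcons' f w).1 hmem)) hw2 hf2
  have hc := hCwCons w (wm' w ∪ wm w) (wm' w) hsubw Finset.subset_union_left
  rw [← hc, hIR']

/-- The opposite market, swapping the roles of firms and workers. -/
def Market.op {F W : Type*} (M : Market F W) : Market W F :=
  ⟨M.uW, M.uF, M.injW, M.injF⟩

/-- The opposite matching. -/
def Matching.op {F W : Type*} (μ : Matching F W) : Matching W F :=
  ⟨μ.wm, μ.fm, fun w f => (μ.consistent f w).symm⟩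

namespace Market

variable {F W : Type*} [DecidableEq F] [DecidableEq W] (M : Market F W)

lemma Cf_subset (f : F) {S : Finset W} : M.Cf f S ⊆ S := bestIn_subset

lemma Cw_subset (w : W) {S : Finset F} : M.Cw w S ⊆ S := bestIn_subset

lemma Cf_cons (f : F) {S S' : Finset W} (h1 : M.Cf f S ⊆ S') (h2 : S' ⊆ S) :
    M.Cf f S' = M.Cf f S := bestIn_cons (M.injF f) h1 h2

lemma Cw_cons (w : W) {S S' : Finset F} (h1 : M.Cw w S ⊆ S') (h2 : S' ⊆ S) :
    M.Cw w S' = M.Cw w S := bestIn_cons (M.injW w) h1 h2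

lemma Cf_extend (f : F) (hs : Substitutable (M.Cf f)) {A₀ B : Finset W}
    (h : M.Cf f (A₀ ∪ B) = A₀) (b : W) :
    M.Cf f (insert b (A₀ ∪ B)) = M.Cf f (insert b A₀) := bestIn_extend (M.injF f) hs h b

lemma Cw_extend (w : W) (hs : Substitutable (M.Cw w)) {A₀ B : Finset F}
    (h : M.Cw w (A₀ ∪ B) = A₀) (b : F) :
    M.Cw w (insert b (A₀ ∪ B)) = M.Cw w (insert b A₀) := bestIn_extend (M.injW w) hs h b

lemma Cw_singleton_acc {w : W} {f : F} (h : f ∈ M.Cw w {f}) :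
    M.uW w ∅ < M.uW w {f} := by
  have hsub : M.Cw w {f} ⊆ {f} := M.Cw_subset w
  have heq : M.Cw w {f} = {f} :=
    Finset.Subset.antisymm hsub (Finset.singleton_subset_iff.2 h)
  have hacc : M.Cw w {f} ∈ {T | M.uW w ∅ < M.uW w T} ∨ M.Cw w {f} = ∅ := bestIn_acc
  rcases hacc with ha | ha
  · rwa [heq] at ha
  · rw [ha] at h; exact absurd h (Finset.notMem_empty f)

/-- Stability transfers to the opposite market. -/
lemma stable_op {μ : Matching F W} (h : M.Stable μ) : (M.op).Stable μ.op := by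
  refine ⟨⟨h.1.2, h.1.1⟩, fun w f hb => ?_⟩
  obtain ⟨hb1, hb2, hb3⟩ := hb
  exact h.2 f w ⟨fun hm => hb1 ((μ.consistent f w).1 hm), hb3, hb2⟩

end Market

namespace Market

variable {F W : Type*} [DecidableEq F] [DecidableEq W] (M : Market F W)

lemma Cfred_eq_filter (μ μt : Matching F W) (f : F) (S : Finset W) :
    M.Cfred μ μt f S = M.Cf f (S.filter (fun x => x ∉ M.Dall μ μt f)) := by
  set S₀ := S.filter (fun x => x ∉ M.Dall μ μt f) with hS₀
  have hsub0 : S₀ ⊆ S := Finset.filter_subset _ _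
  apply bestIn_eq (M.injF f)
  · exact (M.Cf_subset f).trans hsub0
  · have hacc : M.Cf f S₀ ∈ {T | M.uF f ∅ < M.uF f T} ∨ M.Cf f S₀ = ∅ := bestIn_acc
    rcases hacc with ha | ha
    · exact Or.inl ⟨ha, fun x hx => (Finset.mem_filter.1 ((M.Cf_subset f) hx)).2⟩
    · exact Or.inr ha
  · intro T hT hA
    rcases hA with hA | hA
    · have hT0 : T ⊆ S₀ := fun x hx => Finset.mem_filter.2 ⟨hT hx, hA.2 x hx⟩
      exact bestIn_le hT0 (Or.inl hA.1)
    · rw [hA]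
      exact bestIn_le (Finset.empty_subset _) (Or.inr rfl)

lemma Cfred_free {μ μt : Matching F W} {f : F} {S : Finset W}
    (h : ∀ x ∈ S, x ∉ M.Dall μ μt f) : M.Cfred μ μt f S = M.Cf f S := by
  rw [Cfred_eq_filter, Finset.filter_eq_self.2 h]

lemma mem_Cfred_not {μ μt : Matching F W} {f : F} {S : Finset W} {x : W}
    (hx : x ∈ M.Cfred μ μt f S) : x ∉ M.Dall μ μt f := by
  rw [Cfred_eq_filter] at hx
  exact (Finset.mem_filter.1 ((M.Cf_subset f) hx)).2

lemma Cfred_subst {μ μt : Matching F W} {f : F} (hs : Substitutable (M.Cf f)) :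
    Substitutable (M.Cfred μ μt f) := by
  intro S S' b hss hb
  have hbD := M.mem_Cfred_not hb
  rw [Cfred_eq_filter] at hb ⊢
  rw [Finset.filter_insert, if_pos hbD]
  exact hs _ _ b (Finset.filter_subset_filter _ hss) hb

lemma Cfred_subset (μ μt : Matching F W) (f : F) {S : Finset W} :
    M.Cfred μ μt f S ⊆ S := bestIn_subset

lemma Cfred_cons (μ μt : Matching F W) (f : F) {S S' : Finset W}
    (h1 : M.Cfred μ μt f S ⊆ S') (h2 : S' ⊆ S) :
    M.Cfred μ μt f S' = M.Cfred μ μt f S := bestIn_cons (M.injF f) h1 h2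

lemma Cwred_eq_filter (μ μt : Matching F W) (w : W) (S : Finset F) :
    M.Cwred μ μt w S = M.Cw w (S.filter (fun x => x ∉ M.Eall μ μt w)) :=
  (M.op).Cfred_eq_filter μt.op μ.op w S

lemma Cwred_free {μ μt : Matching F W} {w : W} {S : Finset F}
    (h : ∀ x ∈ S, x ∉ M.Eall μ μt w) : M.Cwred μ μt w S = M.Cw w S :=
  (M.op).Cfred_free (μ := μt.op) (μt := μ.op) h

lemma mem_Cwred_not {μ μt : Matching F W} {w : W} {S : Finset F} {x : F}
    (hx : x ∈ M.Cwred μ μt w S) : x ∉ M.Eall μ μt w :=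
  (M.op).mem_Cfred_not (μ := μt.op) (μt := μ.op) hx

lemma Cwred_subst {μ μt : Matching F W} {w : W} (hs : Substitutable (M.Cw w)) :
    Substitutable (M.Cwred μ μt w) :=
  (M.op).Cfred_subst (μ := μt.op) (μt := μ.op) hs

lemma Cwred_subset (μ μt : Matching F W) (w : W) {S : Finset F} :
    M.Cwred μ μt w S ⊆ S := bestIn_subset

lemma Cwred_cons (μ μt : Matching F W) (w : W) {S S' : Finset F}
    (h1 : M.Cwred μ μt w S ⊆ S') (h2 : S' ⊆ S) :
    M.Cwred μ μt w S' = M.Cwred μ μt w S := bestIn_cons (M.injW w)  h1 h2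

/-- Nothing surviving Step 1(a) deletions is Blair-better than `μF(f)` for `f`. -/
lemma K1 {μF : Matching F W} {f : F} (hIRF : M.Cf f (μF.fm f) = μF.fm f)
    {T : Finset W} (hT : ∀ x ∈ T, x ∉ M.D1 μF f) :
    M.Cf f (μF.fm f ∪ T) = μF.fm f := by
  set R := M.Cf f (μF.fm f ∪ T) with hR
  have hRsub : R ⊆ μF.fm f ∪ T := M.Cf_subset f
  have hcons : M.Cf f (R ∪ μF.fm f) = R :=
    M.Cf_cons f Finset.subset_union_left
      (Finset.union_subset hRsub Finset.subset_union_left)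
  by_cases he : R = μF.fm f
  · exact he
  · by_cases hx : ∃ x ∈ R, x ∉ μF.fm f
    · obtain ⟨x, hxR, hxn⟩ := hx
      have hxT : x ∈ T := (Finset.mem_union.1 (hRsub hxR)).resolve_left hxn
      exact absurd ⟨R, ⟨hcons, he⟩, hxR, hxn⟩ (hT x hxT)
    · push_neg at hx
      have hRsub' : R ⊆ μF.fm f := hx
      have h2 : M.Cf f (μF.fm f) = R := M.Cf_cons f hRsub' Finset.subset_union_left
      rw [← h2, hIRF]

end Market

namespace Market

variable {F W : Type*} [DecidableEq F] [DecidableEq W] (M : Market F W)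

/-- Key lemma: no deleted worker can be involved with `f` at a matching `μ'` lying
(Blair-)between `μW` and `μF`. -/
lemma not_mem_Dall (hsubF : ∀ f, Substitutable (M.Cf f)) (hsubW : ∀ w, Substitutable (M.Cw w))
    {μF μW μ' : Matching F W} (hμF : M.Stable μF) (hμW : M.Stable μW)
    (hWμF : ∀ w, M.Cw w (μ'.wm w ∪ μF.wm w) = μ'.wm w)
    (hFμW : ∀ f, M.Cf f (μ'.fm f ∪ μW.fm f) = μ'.fm f)
    {f : F} {w : W}
    (hB1 : w ∈ M.Cf f (insert w (μ'.fm f)))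
    (hB2 : f ∈ M.Cw w (insert f (μ'.wm w))) :
    w ∉ M.Dall μF μW f := by
  -- derived memberships
  have hBW : f ∈ M.Cw w (insert f (μF.wm w)) := by
    have he := M.Cw_extend w (hsubW w) (hWμF w) f
    rw [← he] at hB2
    exact hsubW w _ _ f (Finset.subset_union_right.trans (Finset.subset_insert _ _)) hB2
  have hBF : w ∈ M.Cf f (insert w (μW.fm f)) := by
    have he := M.Cf_extend f (hsubF f) (hFμW f) w
    rw [← he] at hB1
    exact hsubF f _ _ w (Finset.subset_union_right.trans (Finset.subset_insert _ _)) hB1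
  intro hD
  rcases hD with (hD | hD) | hD
  · -- Step 1(a)
    obtain ⟨W', ⟨hW'eq, _⟩, hwW', hwn⟩ := hD
    have h1 : w ∈ M.Cf f (W' ∪ μF.fm f) := by rw [hW'eq]; exact hwW'
    have h2 : w ∈ M.Cf f (insert w (μF.fm f)) :=
      hsubF f _ _ w Finset.subset_union_right h1
    exact hμF.2 f w ⟨hwn, h2, hBW⟩
  · -- Step 2(a)
    obtain ⟨W', ⟨hW'eq, _⟩, hwW', hwn⟩ := hD
    have hc : M.Cf f (insert w (μW.fm f)) = μW.fm f := by
      have := M.Cf_cons f (S := μW.fm f ∪ W') (S' := insert w (μW.fm f))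
        (by rw [hW'eq]; exact Finset.subset_insert _ _)
        (Finset.insert_subset (Finset.mem_union_right _ hwW') Finset.subset_union_left)
      rw [this, hW'eq]
    rw [hc] at hBF
    exact hwn hBF
  · -- Step 3
    rcases hD with hna | hE
    · have h1 : f ∈ M.Cw w (insert f ∅) :=
        hsubW w _ _ f (Finset.empty_subset _) hB2
      simp only [Finset.insert_empty] at h1
      exact hna (M.Cw_singleton_acc h1)
    · rcases hE with hE | hE
      · -- f ∈ E1 μW w
        obtain ⟨F', ⟨hF'eq, _⟩, hfF', hfn⟩ := hE
        have h1 : f ∈ M.Cw w (F' ∪ μW.wm w) := by rw [hF'eq]; exact hfF'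
        have h2 : f ∈ M.Cw w (insert f (μW.wm w)) :=
          hsubW w _ _ f Finset.subset_union_right h1
        have hwn : w ∉ μW.fm f := fun h => hfn ((μW.consistent f w).1 h)
        exact hμW.2 f w ⟨hwn, hBF, h2⟩
      · -- f ∈ E2 μF w
        obtain ⟨F', ⟨hF'eq, _⟩, hfF', hfn⟩ := hE
        have hc : M.Cw w (insert f (μF.wm w)) = μF.wm w := by
          have := M.Cw_cons w (S := μF.wm w ∪ F') (S' := insert f (μF.wm w))
            (by rw [hF'eq]; exact Finset.subset_insert _ _)
            (Finset.insert_subset (Finset.mem_union_right _ hfF') Finset.subset_union_left)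
          rw [this, hF'eq]
        rw [hc] at hBW
        exact hfn hBW

lemma not_mem_Eall (hsubF : ∀ f, Substitutable (M.Cf f)) (hsubW : ∀ w, Substitutable (M.Cw w))
    {μF μW μ' : Matching F W} (hμF : M.Stable μF) (hμW : M.Stable μW)
    (hWμF : ∀ w, M.Cw w (μ'.wm w ∪ μF.wm w) = μ'.wm w)
    (hFμW : ∀ f, M.Cf f (μ'.fm f ∪ μW.fm f) = μ'.fm f)
    {f : F} {w : W}
    (hB1 : w ∈ M.Cf f (insert w (μ'.fm f)))
    (hB2 : f ∈ M.Cw w (insert f (μ'.wm w))) :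
    f ∉ M.Eall μF μW w :=
  (M.op).not_mem_Dall hsubW hsubF (μF := μW.op) (μW := μF.op) (μ' := μ'.op)
    (M.stable_op hμW) (M.stable_op hμF) hFμW hWμF hB2 hB1

end Market

namespace Market

variable {F W : Type*} [DecidableEq F] [DecidableEq W] (M : Market F W)

/-- Every stable matching lying Blair-between `μW` and `μF` is stable for the reduced
profile. -/
lemma stable_to_red (hsubF : ∀ f, Substitutable (M.Cf f)) (hsubW : ∀ w, Substitutable (M.Cw w))
    {μF μW μ' : Matching F W} (hμF : M.Stable μF) (hμW : M.Stable μW)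
    (hgeF : M.geF μF μ') (hgeW : M.geW μW μ') (h' : M.Stable μ') :
    M.Stablered μF μW μ' := by
  have hWμF : ∀ w, M.Cw w (μ'.wm w ∪ μF.wm w) = μ'.wm w :=
    polar M.Cf M.Cw (fun w S => M.Cw_subset w) hsubF hsubW
      (fun w S S'' h1 h2 => M.Cw_cons w h1 h2) μF.fm μ'.fm μF.wm μ'.wm
      μF.consistent μ'.consistent h'.1.2
      (fun f w a b c => h'.2 f w ⟨a, b, c⟩) hgeF
  have hFμW : ∀ f, M.Cf f (μ'.fm f ∪ μW.fm f) = μ'.fm f :=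
    polar M.Cw M.Cf (fun f S => M.Cf_subset f) hsubW hsubF
      (fun f S S'' h1 h2 => M.Cf_cons f h1 h2) μW.wm μ'.wm μW.fm μ'.fm
      (fun w f => (μW.consistent f w).symm) (fun w f => (μ'.consistent f w).symm) h'.1.1
      (fun w f a b c => h'.2 f w ⟨fun hm => a ((μ'.consistent f w).1 hm), c, b⟩) hgeW
  have hfreeF : ∀ f, ∀ x ∈ μ'.fm f, x ∉ M.Dall μF μW f := by
    intro f x hx
    have hB1 : x ∈ M.Cf f (insert x (μ'.fm f)) := by
      rw [Finset.insert_eq_self.2 hx, h'.1.1 f]; exact hx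
    have hfx : f ∈ μ'.wm x := (μ'.consistent f x).1 hx
    have hB2 : f ∈ M.Cw x (insert f (μ'.wm x)) := by
      rw [Finset.insert_eq_self.2 hfx, h'.1.2 x]; exact hfx
    exact M.not_mem_Dall hsubF hsubW hμF hμW hWμF hFμW hB1 hB2
  have hfreeW : ∀ w, ∀ x ∈ μ'.wm w, x ∉ M.Eall μF μW w := by
    intro w x hx
    have hwx : w ∈ μ'.fm x := (μ'.consistent x w).2 hx
    have hB1 : w ∈ M.Cf x (insert w (μ'.fm x)) := by
      rw [Finset.insert_eq_self.2 hwx, h'.1.1 x]; exact hwx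
    have hB2 : x ∈ M.Cw w (insert x (μ'.wm w)) := by
      rw [Finset.insert_eq_self.2 hx, h'.1.2 w]; exact hx
    exact M.not_mem_Eall hsubF hsubW hμF hμW hWμF hFμW hB1 hB2
  refine ⟨⟨fun f => ?_, fun w => ?_⟩, fun f w hb => ?_⟩
  · rw [M.Cfred_free (hfreeF f)]; exact h'.1.1 f
  · rw [M.Cwred_free (hfreeW w)]; exact h'.1.2 w
  · obtain ⟨hbn, hb1, hb2⟩ := hb
    have hwD := M.mem_Cfred_not hb1
    have hfE := M.mem_Cwred_not hb2
    rw [M.Cfred_free (by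
      intro x hxm
      rcases Finset.mem_insert.1 hxm with h | h
      · rwa [h]
      · exact hfreeF f x h)] at hb1
    rw [M.Cwred_free (by
      intro x hxm
      rcases Finset.mem_insert.1 hxm with h | h
      · rwa [h]
      · exact hfreeW w x h)] at hb2
    exact h'.2 f w ⟨hbn, hb1, hb2⟩

/-- Every matching stable for the reduced profile is stable for the original profile. -/
lemma red_to_stable (hsubF : ∀ f, Substitutable (M.Cf f)) (hsubW : ∀ w, Substitutable (M.Cw w))
    {μF μW μ' : Matching F W} (hμF : M.Stable μF) (hμW : M.Stable μW)
    (hredF : M.Stablered μF μW μF) (hredW : M.Stablered μF μW μW)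
    (h' : M.Stablered μF μW μ') : M.Stable μ' := by
  have hfreeF : ∀ f, ∀ x ∈ μ'.fm f, x ∉ M.Dall μF μW f :=
    fun f x hx => M.mem_Cfred_not (S := μ'.fm f) (by rw [h'.1.1 f]; exact hx)
  have hfreeW : ∀ w, ∀ x ∈ μ'.wm w, x ∉ M.Eall μF μW w :=
    fun w x hx => M.mem_Cwred_not (S := μ'.wm w) (by rw [h'.1.2 w]; exact hx)
  have hfreeFF : ∀ f, ∀ x ∈ μF.fm f, x ∉ M.Dall μF μW f :=
    fun f x hx => M.mem_Cfred_not (S := μF.fm f) (by rw [hredF.1.1 f]; exact hx)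
  have hfreeWF : ∀ w, ∀ x ∈ μF.wm w, x ∉ M.Eall μF μW w :=
    fun w x hx => M.mem_Cwred_not (S := μF.wm w) (by rw [hredF.1.2 w]; exact hx)
  have hfreeFW : ∀ f, ∀ x ∈ μW.fm f, x ∉ M.Dall μF μW f :=
    fun f x hx => M.mem_Cfred_not (S := μW.fm f) (by rw [hredW.1.1 f]; exact hx)
  have hfreeWW : ∀ w, ∀ x ∈ μW.wm w, x ∉ M.Eall μF μW w :=
    fun w x hx => M.mem_Cwred_not (S := μW.wm w) (by rw [hredW.1.2 w]; exact hx)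
  have hgeRed : ∀ f, M.Cfred μF μW f (μF.fm f ∪ μ'.fm f) = μF.fm f := by
    intro f
    rw [M.Cfred_free (by
      intro x hx
      rcases Finset.mem_union.1 hx with h | h
      exacts [hfreeFF f x h, hfreeF f x h])]
    exact M.K1 (hμF.1.1 f) (fun x hx hD => hfreeF f x hx (Or.inl (Or.inl hD)))
  have hWμFred : ∀ w, M.Cwred μF μW w (μ'.wm w ∪ μF.wm w) = μ'.wm w :=
    polar (M.Cfred μF μW) (M.Cwred μF μW) (fun w S => M.Cwred_subset μF μW w)
      (fun f => M.Cfred_subst (hsubF f)) (fun w => M.Cwred_subst (hsubW w))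
      (fun w S S'' h1 h2 => M.Cwred_cons μF μW w h1 h2)
      μF.fm μ'.fm μF.wm μ'.wm μF.consistent μ'.consistent h'.1.2
      (fun f w a b c => h'.2 f w ⟨a, b, c⟩) hgeRed
  have hWμF : ∀ w, M.Cw w (μ'.wm w ∪ μF.wm w) = μ'.wm w := by
    intro w
    rw [← M.Cwred_free (μ := μF) (μt := μW) (by
      intro x hx
      rcases Finset.mem_union.1 hx with h | h
      exacts [hfreeW w x h, hfreeWF w x h])]
    exact hWμFred w
  have hge'Red : ∀ w, M.Cwred μF μW w (μW.wm w ∪ μ'.wm w) = μW.wm w := by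
    intro w
    rw [M.Cwred_free (by
      intro x hx
      rcases Finset.mem_union.1 hx with h | h
      exacts [hfreeWW w x h, hfreeW w x h])]
    exact (M.op).K1 (μF := μW.op) (hμW.1.2 w)
      (fun x hx hD => hfreeW w x hx (Or.inl (Or.inl hD)))
  have hFμWred : ∀ f, M.Cfred μF μW f (μ'.fm f ∪ μW.fm f) = μ'.fm f :=
    polar (M.Cwred μF μW) (M.Cfred μF μW) (fun f S => M.Cfred_subset μF μW f)
      (fun w => M.Cwred_subst (hsubW w)) (fun f => M.Cfred_subst (hsubF f))
      (fun f S S'' h1 h2 => M.Cfred_cons μF μW f h1 h2)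
      μW.wm μ'.wm μW.fm μ'.fm (fun w f => (μW.consistent f w).symm)
      (fun w f => (μ'.consistent f w).symm) h'.1.1
      (fun w f a b c => h'.2 f w ⟨fun hm => a ((μ'.consistent f w).1 hm), c, b⟩) hge'Red
  have hFμW : ∀ f, M.Cf f (μ'.fm f ∪ μW.fm f) = μ'.fm f := by
    intro f
    rw [← M.Cfred_free (μ := μF) (μt := μW) (by
      intro x hx
      rcases Finset.mem_union.1 hx with h | h
      exacts [hfreeF f x h, hfreeFW f x h])]
    exact hFμWred f
  refine ⟨⟨fun f => ?_, fun w => ?_⟩, fun f w hb => ?_⟩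
  · rw [← M.Cfred_free (hfreeF f)]; exact h'.1.1 f
  · rw [← M.Cwred_free (hfreeW w)]; exact h'.1.2 w
  · obtain ⟨hbn, hb1, hb2⟩ := hb
    have hwD := M.not_mem_Dall hsubF hsubW hμF hμW hWμF hFμW hb1 hb2
    have hfE := M.not_mem_Eall hsubF hsubW hμF hμW hWμF hFμW hb1 hb2
    refine h'.2 f w ⟨hbn, ?_, ?_⟩
    · rw [M.Cfred_free (by
        intro x hxm
        rcases Finset.mem_insert.1 hxm with h | h
        · rwa [h]
        · exact hfreeF f x h)]
      exact hb1
    · rw [M.Cwred_free (by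
        intro x hxm
        rcases Finset.mem_insert.1 hxm with h | h
        · rwa [h]
        · exact hfreeW w x h)]
      exact hb2

end Market


/-- Corollary 1. With substitutable preferences satisfying the law of
aggregate demand, `S(P) = S(P^{μ_F})`: a matching is stable under `P` if and only if it
is stable under the reduced profile with respect to the firm-optimal stable matching
`μ_F` and the worker-optimal stable matching `μ_W`. -/
theorem stable_iff_stable_reduced {F W : Type*} [DecidableEq F] [DecidableEq W]
    (M : Market F W) (hsub : M.SubstAll) (hlad : M.LADAll)
    (μF μW : Matching F W)
    (hμF : M.Stable μF) (hFopt : ∀ ν, M.Stable ν → M.geF μF ν)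
    (hμW : M.Stable μW) (hWopt : ∀ ν, M.Stable ν → M.geW μW ν) :
    ∀ μ' : Matching F W, M.Stable μ' ↔ M.Stablered μF μW μ' := by
  intro μ'
  constructor
  · intro h'
    exact M.stable_to_red hsub.1 hsub.2 hμF hμW (hFopt μ' h') (hWopt μ' h') h'
  · intro h'
    exact M.red_to_stable hsub.1 hsub.2 hμF hμW
      (M.stable_to_red hsub.1 hsub.2 hμF hμW (hFopt μF hμF) (hWopt μF hμF) hμF)
      (M.stable_to_red hsub.1 hsub.2 hμF hμW (hFopt μW hμW) (hWopt μW hμW) hμW) h'
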